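/- Let g ≥ 2. With the conventions λ_0 = 1 and λ_m = 0 for m < 0 or m > g, let D be the (g−1)×(g−1) matrix over ℛ_g whose (i,j) entry is the class of λ_{g−2i+j} for 1 ≤ i, j ≤ g−1. Then det D = λ_1·λ_2·⋯·λ_{g−1} in ℛ_g. -/

import Mathlib

open MvPolynomial

noncomputable section

/-- The class `λ_m` in `ℚ[λ_1, …, λ_h]`, with the conventions `λ_0 = 1` and
`λ_m = 0` for `m > h`.  Here `λ_m` for `1 ≤ m ≤ h` is the variable `X ⟨m-1⟩`. -/
def lam (h m : ℕ) : MvPolynomial (Fin h) ℚ :=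
  if _h0 : m = 0 then 1
  else if _hm : m ≤ h then X ⟨m - 1, by omega⟩ else 0

/-- The degree-`d` Mumford relation `m_d = Σ_{i+j=d} (−1)^j λ_i λ_j`. -/
def mumford (h d : ℕ) : MvPolynomial (Fin h) ℚ :=
  ∑ i ∈ Finset.range (d + 1), (-1 : MvPolynomial (Fin h) ℚ) ^ (d - i) * lam h i * lam h (d - i)

/-- The Mumford ideal `I_h`, generated by the relations `m_d` for `1 ≤ d ≤ 2h`. -/
def mumfordIdeal (h : ℕ) : Ideal (MvPolynomial (Fin h) ℚ) :=
  Ideal.span (mumford h '' Set.Icc 1 (2 * h))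

/-- `𝒬_h = ℚ[λ_1,…,λ_h]/I_h`. -/
abbrev Qring (h : ℕ) := MvPolynomial (Fin h) ℚ ⧸ mumfordIdeal h

/-- The ideal `I_g + (λ_g)`. -/
def Rideal (g : ℕ) : Ideal (MvPolynomial (Fin g) ℚ) :=
  mumfordIdeal g ⊔ Ideal.span {lam g g}

/-- `ℛ_g = ℚ[λ_1,…,λ_g]/(I_g + (λ_g))`, van der Geer's presentation of the
tautological ring `R*(𝒜_g)`. -/
abbrev Rring (g : ℕ) := MvPolynomial (Fin g) ℚ ⧸ Rideal g

/-- The degree-`k` graded piece of `ℛ_g`, for the grading with `deg λ_i = i`: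
the image of the weighted-homogeneous polynomials of weighted degree `k`. -/
def homogR (g k : ℕ) : Submodule ℚ (Rring g) :=
  Submodule.map (Ideal.Quotient.mkₐ ℚ (Rideal g)).toLinearMap
    (weightedHomogeneousSubmodule ℚ (fun i : Fin g => (i : ℕ) + 1) k)

/-- The degree-`k` graded piece of `𝒬_h`, for the grading with `deg λ_i = i`. -/
def homogQ (h k : ℕ) : Submodule ℚ (Qring h) :=
  Submodule.map (Ideal.Quotient.mkₐ ℚ (mumfordIdeal h)).toLinearMap
    (weightedHomogeneousSubmodule ℚ (fun i : Fin h => (i : ℕ) + 1) k)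


/-- `λ_m` with an integer index: `λ_0 = 1` and `λ_m = 0` for `m < 0` or `m > h`. -/
def lamZ (h : ℕ) (m : ℤ) : MvPolynomial (Fin h) ℚ :=
  if _h0 : m = 0 then 1
  else if _hm : 1 ≤ m ∧ m ≤ (h : ℤ) then X ⟨m.toNat - 1, by omega⟩ else 0

/-! Let `D_k = det (λ_{k-2i+j})_{0 ≤ i, j < k}`. Expanding along the top row, whose entries
after the first are `λ_{k+1}, λ_{k+2}, …`, gives `D_k ≡ λ_k D_{k-1}` modulo the ideal
`(λ_{k+1}, λ_{k+2}, …)`. The Mumford relation `m_{2j}` says `λ_j² ≡ 0` modulo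
`(λ_{j+1}, λ_{j+2}, …)`, so induction on `k` gives `D_k ≡ λ_1 ⋯ λ_k` modulo
`(λ_{k+1}, λ_{k+2}, …)`. For `k = g - 1` this ideal vanishes in `ℛ_g`. -/

section Staircase

variable {A : Type*} (l : ℤ → A)

/-- Entry `(i, j)` (indexed from `0`) is `l (k - 2i + j)`; for `k = g - 1` and `l = λ` this is the
matrix `(λ_{g-2i+j})_{1 ≤ i, j ≤ g-1}`. -/
def staircaseMatrix (k : ℕ) : Matrix (Fin k) (Fin k) A :=
  Matrix.of fun i j => l (k - 2 * i + j)

theorem staircaseMatrix_submatrix_succ (k : ℕ) :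
    (staircaseMatrix l (k + 1)).submatrix Fin.succ Fin.succ = staircaseMatrix l k := by
  ext i j
  simp only [staircaseMatrix, Matrix.submatrix_apply, Matrix.of_apply, Fin.val_succ]
  congr 1
  push_cast
  ring

variable [CommRing A]

theorem det_staircaseMatrix_succ_sub_mem (k : ℕ) :
    (staircaseMatrix l (k + 1)).det - l (k + 1) * (staircaseMatrix l k).det ∈
      Ideal.span (l '' Set.Ioi ((k : ℤ) + 1)) := by
  have h00 : staircaseMatrix l (k + 1) 0 0 = l (k + 1) := by simp [staircaseMatrix]
  rw [Matrix.det_succ_row_zero, Fin.sum_univ_succ, Fin.succAbove_zero,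
    staircaseMatrix_submatrix_succ, h00, Fin.val_zero, pow_zero, one_mul, add_sub_cancel_left]
  refine Ideal.sum_mem _ fun j _ => Ideal.mul_mem_right _ _ (Ideal.mul_mem_left _ _ ?_)
  exact Ideal.subset_span ⟨(k : ℤ) + 1 + ((j : ℤ) + 1), by simp, by simp [staircaseMatrix]⟩

theorem mul_mem_span_Ioi_succ {k : ℤ} {x : A}
    (hsq : l (k + 1) ^ 2 ∈ Ideal.span (l '' Set.Ioi (k + 1)))
    (hx : x ∈ Ideal.span (l '' Set.Ioi k)) :
    l (k + 1) * x ∈ Ideal.span (l '' Set.Ioi (k + 1)) := by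
  have hIoi : Set.Ioi k = insert (k + 1) (Set.Ioi (k + 1)) := by
    ext m; simp only [Set.mem_Ioi, Set.mem_insert_iff]; omega
  rw [hIoi, Set.image_insert_eq, Ideal.mem_span_insert] at hx
  obtain ⟨a, y, hy, rfl⟩ := hx
  rw [mul_add, mul_left_comm, ← sq]
  exact Ideal.add_mem _ (Ideal.mul_mem_left _ _ hsq) (Ideal.mul_mem_left _ _ hy)

theorem det_staircaseMatrix_sub_prod_mem (k : ℕ)
    (hsq : ∀ j ∈ Finset.Icc 1 k, l j ^ 2 ∈ Ideal.span (l '' Set.Ioi (j : ℤ))) :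
    (staircaseMatrix l k).det - ∏ j ∈ Finset.Icc 1 k, l j ∈
      Ideal.span (l '' Set.Ioi (k : ℤ)) := by
  induction k with
  | zero => simp
  | succ k ih =>
    have hk := ih fun j hj => hsq j (Finset.Icc_subset_Icc_right k.le_succ hj)
    have hsq' := hsq (k + 1) (by simp)
    rw [Finset.prod_Icc_succ_top (by omega)]
    push_cast at hsq' ⊢
    have hsplit : (staircaseMatrix l (k + 1)).det - (∏ j ∈ Finset.Icc 1 k, l j) * l (k + 1) =
        ((staircaseMatrix l (k + 1)).det - l (k + 1) * (staircaseMatrix l k).det) +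
          l (k + 1) * ((staircaseMatrix l k).det - ∏ j ∈ Finset.Icc 1 k, l j) := by ring
    rw [hsplit]
    exact Ideal.add_mem _ (det_staircaseMatrix_succ_sub_mem l k)
      (mul_mem_span_Ioi_succ l hsq' hk)

theorem det_staircaseMatrix_eq_prod (k : ℕ)
    (hsq : ∀ j ∈ Finset.Icc 1 k, l j ^ 2 ∈ Ideal.span (l '' Set.Ioi (j : ℤ)))
    (htop : ∀ m : ℤ, k < m → l m = 0) :
    (staircaseMatrix l k).det = ∏ j ∈ Finset.Icc 1 k, l j := by
  have hbot : Ideal.span (l '' Set.Ioi (k : ℤ)) = ⊥ :=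
    Ideal.span_eq_bot.mpr fun _ ⟨m, hm, hx⟩ => hx ▸ htop m hm
  have h := det_staircaseMatrix_sub_prod_mem l k hsq
  rwa [hbot, Ideal.mem_bot, sub_eq_zero] at h

end Staircase

theorem lamZ_natCast (h m : ℕ) : lamZ h m = lam h m := by
  unfold lamZ lam
  split_ifs <;> simp_all
  omega

theorem lamZ_eq_zero_of_lt (h : ℕ) {m : ℤ} (hm : (h : ℤ) < m) : lamZ h m = 0 := by
  rw [lamZ, dif_neg (by omega), dif_neg (by omega)]

theorem lam_mem_span_lamZ_Ioi (h : ℕ) {j m : ℕ} (hjm : j < m) :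
    lam h m ∈ Ideal.span (lamZ h '' Set.Ioi (j : ℤ)) :=
  Ideal.subset_span ⟨m, by simpa using hjm, lamZ_natCast h m⟩

/-- All terms of `m_{2j}` but `±λ_j²` contain a factor `λ_i` with `i > j`. -/
theorem mumford_two_mul_sub_mem (h j : ℕ) :
    mumford h (2 * j) - (-1) ^ j * lam h j ^ 2 ∈ Ideal.span (lamZ h '' Set.Ioi (j : ℤ)) := by
  rw [mumford, ← Finset.add_sum_erase _ _ (Finset.mem_range.mpr (by omega : j < 2 * j + 1)),
    show 2 * j - j = j by omega, mul_assoc, ← sq, add_sub_cancel_left]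
  refine Ideal.sum_mem _ fun i hi => ?_
  obtain ⟨hij, hi⟩ := Finset.mem_erase.mp hi
  rw [Finset.mem_range] at hi
  rcases Nat.lt_or_gt_of_ne hij with hlt | hgt
  · exact Ideal.mul_mem_left _ _ (lam_mem_span_lamZ_Ioi h (by omega))
  · exact Ideal.mul_mem_right _ _ (Ideal.mul_mem_left _ _ (lam_mem_span_lamZ_Ioi h hgt))

theorem mk_lamZ_eq_zero_of_le (g : ℕ) {m : ℤ} (hm : (g : ℤ) ≤ m) :
    Ideal.Quotient.mk (Rideal g) (lamZ g m) = 0 := by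
  rcases hm.lt_or_eq with hlt | rfl
  · rw [lamZ_eq_zero_of_lt g hlt, map_zero]
  · rw [lamZ_natCast, Ideal.Quotient.eq_zero_iff_mem]
    exact Ideal.mem_sup_right (Ideal.mem_span_singleton_self _)

theorem mk_lamZ_sq_mem_span_Ioi (g : ℕ) {j : ℕ} (hj0 : 1 ≤ j) (hj : j ≤ g) :
    Ideal.Quotient.mk (Rideal g) (lamZ g j) ^ 2 ∈
      Ideal.span ((Ideal.Quotient.mk (Rideal g) ∘ lamZ g) '' Set.Ioi (j : ℤ)) := by
  have hmem := Ideal.mem_map_of_mem (Ideal.Quotient.mk (Rideal g)) (mumford_two_mul_sub_mem g j)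
  have hrel : Ideal.Quotient.mk (Rideal g) (mumford g (2 * j)) = 0 :=
    Ideal.Quotient.eq_zero_iff_mem.mpr
      (Ideal.mem_sup_left (Ideal.subset_span ⟨2 * j, ⟨by omega, by omega⟩, rfl⟩))
  rw [Ideal.map_span, ← Set.image_comp, map_sub, hrel, zero_sub, Ideal.neg_mem_iff, map_mul,
    map_pow, map_pow, map_neg, map_one, ← lamZ_natCast] at hmem
  have hsign : (-1 : Rring g) ^ j * (-1) ^ j = 1 := pow_mul_pow_eq_one j (by norm_num)
  have h := Ideal.mul_mem_left _ ((-1) ^ j) hmem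
  rwa [← mul_assoc, hsign, one_mul] at h

theorem Rring_jacobiTrudi_det_general (g : ℕ) :
    Matrix.det (Matrix.of fun i j : Fin (g - 1) =>
        Ideal.Quotient.mk (Rideal g)
          (lamZ g ((g : ℤ) - 2 * ((i : ℤ) + 1) + ((j : ℤ) + 1)))) =
      Ideal.Quotient.mk (Rideal g) (∏ j ∈ Finset.Icc 1 (g - 1), lam g j) := by
  have hmatrix : (Matrix.of fun i j : Fin (g - 1) =>
        Ideal.Quotient.mk (Rideal g) (lamZ g ((g : ℤ) - 2 * ((i : ℤ) + 1) + ((j : ℤ) + 1)))) =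
      staircaseMatrix (Ideal.Quotient.mk (Rideal g) ∘ lamZ g) (g - 1) := by
    ext i j
    have := i.isLt
    simp only [staircaseMatrix, Matrix.of_apply, Function.comp_apply]
    congr 2
    omega
  rw [hmatrix, det_staircaseMatrix_eq_prod, map_prod]
  · simp only [Function.comp_apply, lamZ_natCast]
  · exact fun j hj => mk_lamZ_sq_mem_span_Ioi g (Finset.mem_Icc.mp hj).1 (by simp at hj; omega)
  · exact fun m hm => mk_lamZ_eq_zero_of_le g (by omega)

/-- **The dual Jacobi–Trudi determinant for the staircase partition in ℛ_g.**
For `g ≥ 2`, the determinant of the `(g−1) × (g−1)` matrix over `ℛ_g` with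
`(i,j)` entry `λ_{g−2i+j}` (for `1 ≤ i, j ≤ g−1`, with `λ_0 = 1` and `λ_m = 0`
for `m < 0` or `m > g`) equals `λ_1 λ_2 ⋯ λ_{g−1}`. -/
theorem Rring_jacobiTrudi_det (g : ℕ) (hg : 2 ≤ g) :
    Matrix.det (Matrix.of fun i j : Fin (g - 1) =>
        Ideal.Quotient.mk (Rideal g)
          (lamZ g ((g : ℤ) - 2 * ((i : ℤ) + 1) + ((j : ℤ) + 1)))) =
      Ideal.Quotient.mk (Rideal g) (∏ j ∈ Finset.Icc 1 (g - 1), lam g j) :=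
  Rring_jacobiTrudi_det_general g

end
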